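/- arXiv:2205.09090 — 3 statements merged into one kernel-verified Lean document; each statement's English description precedes it below -/
import Mathlib

section
/- Fix a ≥ 0. Let ki_n^a be the number of Kostant involutions in S_n with exactly a transpositions in their cycle decomposition, and let mi_n^a be the number of 321-avoiding involutions in S_n with exactly a transpositions. Then the ratio ki_n^a / mi_n^a, viewed as a sequence of real numbers (defined for n ≥ 2a), tends to 1 as n → ∞. -/
/-!
A special involution `σ_{i,j}` acts on the interval `[i-j, i+j+1]` by shifting its lower half up
and its upper half down, and the intervals of distant special involutions are disjoint. Hence a
Kostant involution is an involution all of whose inversions lie inside one interval, from its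
lower to its upper half, so it avoids `321`: `ki n a ≤ mia n a`.

A `321`-avoiding involution has non-nesting arcs and no fixed point under an arc, so it is
determined by its set of openers `{k | k < w k}`, an `a`-subset of `{1,…,n}`; hence
`mia n a ≤ C(n,a)`.

Conversely, an `a`-subset `P` of `{1,…,n-1}` whose elements are at distance at least `3` gives
the Kostant involution `∏_{p ∈ P} (p p+1)` with openers `P`. All but `O(n^(a-1))` of the
`a`-subsets are of this kind, so `ki n a ≥ C(n,a) (1 - 3a²/n)` and the ratio is squeezed to `1`.
-/

/-- The special involution `σ_{i,j}` of `S_n`: the permutation of `{1,…,n}` that swaps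
`k` and `k+j+1` for every `k` with `i-j ≤ k ≤ i` (these transpositions are pairwise
disjoint, hence commute) and fixes all other points. -/
def sigmaPerm (i j : ℕ) : Equiv.Perm ℕ :=
  ((List.range (j + 1)).map (fun t => Equiv.swap (i - j + t) (i + t + 1))).prod

/-- The parameter constraints `1 ≤ i ≤ n-1` and `0 ≤ j ≤ min(i-1, n-1-i)` for a special
involution `σ_{i,j}` of `S_n`. -/
def SpecialParams (n i j : ℕ) : Prop :=
  1 ≤ i ∧ i ≤ n - 1 ∧ j ≤ min (i - 1) (n - 1 - i)

/-- The extended support `{i-j-1, i-j, …, i+j+2}` of `σ_{i,j}`. -/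
def extSupport (i j : ℕ) : Finset ℕ := Finset.Icc (i - j - 1) (i + j + 2)

/-- Two special involutions (given by their parameters) are distant if their extended
supports have at most one common element. -/
def Distant (p q : ℕ × ℕ) : Prop :=
  (extSupport p.1 p.2 ∩ extSupport q.1 q.2).card ≤ 1

/-- A Kostant involution in `S_n`: a product of pairwise distant special involutions
(the identity being the empty product). -/
def IsKostant (n : ℕ) (w : Equiv.Perm ℕ) : Prop :=
  ∃ L : List (ℕ × ℕ),
    (∀ p ∈ L, SpecialParams n p.1 p.2) ∧
    L.Pairwise Distant ∧
    w = (L.map (fun p => sigmaPerm p.1 p.2)).prod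

/-- `ki n a` is the number of Kostant involutions in `S_n` whose cycle decomposition
contains exactly `a` transpositions, i.e. with exactly `2a` non-fixed points. -/
noncomputable def ki (n a : ℕ) : ℕ :=
  Set.ncard {w : Equiv.Perm ℕ | IsKostant n w ∧ Set.ncard {k : ℕ | w k ≠ k} = 2 * a}


/-- `w` is a permutation of `{1,…,n}` (i.e. fixes every point outside `{1,…,n}`)
which is an involution: `w² = 1`. -/
def IsInvolutionOn (n : ℕ) (w : Equiv.Perm ℕ) : Prop :=
  (∀ k : ℕ, w k ≠ k → 1 ≤ k ∧ k ≤ n) ∧ w * w = 1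

/-- `w ∈ S_n` is 321-avoiding: there are no indices `1 ≤ p < q < r ≤ n` with
`w(p) > w(q) > w(r)`. -/
def Avoids321 (n : ℕ) (w : Equiv.Perm ℕ) : Prop :=
  ∀ p q r : ℕ, 1 ≤ p → p < q → q < r → r ≤ n → ¬ (w q < w p ∧ w r < w q)

/-- `mia n a` is the number of 321-avoiding involutions in `S_n` whose cycle decomposition
contains exactly `a` transpositions, i.e. with exactly `2a` non-fixed points. -/
noncomputable def mia (n a : ℕ) : ℕ :=
  Set.ncard {w : Equiv.Perm ℕ |
    IsInvolutionOn n w ∧ Avoids321 n w ∧ Set.ncard {k : ℕ | w k ≠ k} = 2 * a}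

open Equiv Finset

namespace List

variable {α : Type*} {l : List (Equiv.Perm α)} {x : α}

lemma prod_apply_of_forall_apply_eq (h : ∀ σ ∈ l, σ x = x) : l.prod x = x := by
  induction l with
  | nil => rfl
  | cons τ l ih =>
    rw [prod_cons, Equiv.Perm.mul_apply, ih fun σ hσ => h σ (mem_cons_of_mem τ hσ),
      h τ mem_cons_self]

lemma prod_apply_of_pairwise_disjoint (hl : l.Pairwise Equiv.Perm.Disjoint)
    {σ : Equiv.Perm α} (hσ : σ ∈ l) (hx : σ x ≠ x) : l.prod x = σ x := by
  induction l with
  | nil => simp at hσ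
  | cons τ l ih =>
    rw [pairwise_cons] at hl
    rw [prod_cons, Equiv.Perm.mul_apply]
    rcases mem_cons.1 hσ with rfl | hσ
    · rw [prod_apply_of_forall_apply_eq fun ρ hρ => ((hl.1 ρ hρ) x).resolve_left hx]
    · rw [ih hl.2 hσ]
      exact ((hl.1 σ hσ) (σ x)).resolve_right fun h => hx (σ.injective h)

end List

def sigmaSupport (i j : ℕ) : Finset ℕ := Icc (i - j) (i + j + 1)

lemma sigmaPerm_apply_of_notMem {i j x : ℕ} (hx : x ∉ sigmaSupport i j) :
    sigmaPerm i j x = x :=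
  List.prod_apply_of_forall_apply_eq fun σ hσ => by
    obtain ⟨t, ht, rfl⟩ := List.mem_map.1 hσ
    rw [sigmaSupport, mem_Icc] at hx
    have := List.mem_range.1 ht
    exact swap_apply_of_ne_of_ne (by omega) (by omega)

lemma sigmaPerm_apply_of_mem {i j x : ℕ} (hji : j < i) (hx : x ∈ sigmaSupport i j) :
    sigmaPerm i j x = if x ≤ i then x + j + 1 else x - (j + 1) := by
  rw [sigmaSupport, mem_Icc] at hx
  have hdisj : ((List.range (j + 1)).map fun t => swap (i - j + t) (i + t + 1)).Pairwise
      Perm.Disjoint := by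
    refine List.Pairwise.map _ (R := fun s t => s < j + 1 ∧ t < j + 1 ∧ s < t)
      (fun s t hst => Perm.disjoint_swap_swap ?_) <| List.pairwise_lt_range.imp_of_mem
        fun hs ht hst => ⟨List.mem_range.1 hs, List.mem_range.1 ht, hst⟩
    simp only [List.nodup_cons, List.mem_cons, List.not_mem_nil, or_false, not_or,
      not_false_eq_true, List.nodup_nil, and_self, and_true]
    omega
  have hswap : ∀ t < j + 1, ∀ y, swap (i - j + t) (i + t + 1) y ≠ y →
      sigmaPerm i j y = swap (i - j + t) (i + t + 1) y := fun t ht _ =>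
    List.prod_apply_of_pairwise_disjoint hdisj (List.mem_map.2 ⟨t, List.mem_range.2 ht, rfl⟩)
  split_ifs with h
  · obtain ⟨t, ht, rfl⟩ : ∃ t < j + 1, i - j + t = x := ⟨x - (i - j), by omega, by omega⟩
    rw [hswap t ht _ (by rw [swap_apply_left]; omega), swap_apply_left]
    omega
  · obtain ⟨t, ht, rfl⟩ : ∃ t < j + 1, i + t + 1 = x := ⟨x - (i + 1), by omega, by omega⟩
    rw [hswap t ht _ (by rw [swap_apply_right]; omega), swap_apply_right]
    omega

lemma SpecialParams.bounds {n i j : ℕ} (h : SpecialParams n i j) :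
    j < i ∧ 1 ≤ i - j ∧ i + j + 1 ≤ n := by
  obtain ⟨h1, h2, h3⟩ := h
  rw [le_min_iff] at h3
  omega

lemma distant_iff {p q : ℕ × ℕ} : Distant p q ↔
    min (p.1 + p.2 + 2) (q.1 + q.2 + 2) ≤ max (p.1 - p.2 - 1) (q.1 - q.2 - 1) := by
  have : extSupport p.1 p.2 ∩ extSupport q.1 q.2 =
      Icc (max (p.1 - p.2 - 1) (q.1 - q.2 - 1)) (min (p.1 + p.2 + 2) (q.1 + q.2 + 2)) := by
    ext x
    simp only [extSupport, mem_inter, mem_Icc]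
    omega
  rw [Distant, this, Nat.card_Icc]
  omega

lemma Distant.symm {p q : ℕ × ℕ} (h : Distant p q) : Distant q p := by
  rwa [Distant, inter_comm]

instance : Std.Symm Distant := ⟨fun _ _ => Distant.symm⟩

lemma Distant.separated {p q : ℕ × ℕ} (h : Distant p q) :
    p.1 + p.2 + 1 < q.1 - q.2 ∨ q.1 + q.2 + 1 < p.1 - p.2 := by
  rw [distant_iff] at h
  omega

lemma Distant.disjoint_sigmaPerm {p q : ℕ × ℕ} (h : Distant p q) :
    (sigmaPerm p.1 p.2).Disjoint (sigmaPerm q.1 q.2) := fun x => by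
  have := h.separated
  by_cases hx : x ∈ sigmaSupport p.1 p.2
  · rw [sigmaSupport, mem_Icc] at hx
    exact Or.inr (sigmaPerm_apply_of_notMem (by rw [sigmaSupport, mem_Icc]; omega))
  · exact Or.inl (sigmaPerm_apply_of_notMem hx)

def kostantProd (L : List (ℕ × ℕ)) : Perm ℕ := (L.map fun p => sigmaPerm p.1 p.2).prod

lemma List.Pairwise.disjoint_sigmaPerm {L : List (ℕ × ℕ)} (hD : L.Pairwise Distant) :
    (L.map fun p => sigmaPerm p.1 p.2).Pairwise Perm.Disjoint :=
  List.Pairwise.map _ (fun _ _ => Distant.disjoint_sigmaPerm) hD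

section kostantProd

variable {L : List (ℕ × ℕ)} (hL : ∀ p ∈ L, p.2 < p.1) (hD : L.Pairwise Distant)

include hL hD in
lemma kostantProd_apply_cases (x : ℕ) :
    (∃ p ∈ L, x ∈ sigmaSupport p.1 p.2 ∧
      kostantProd L x = if x ≤ p.1 then x + p.2 + 1 else x - (p.2 + 1)) ∨
    ((∀ p ∈ L, x ∉ sigmaSupport p.1 p.2) ∧ kostantProd L x = x) := by
  by_cases hx : ∃ p ∈ L, x ∈ sigmaSupport p.1 p.2
  · obtain ⟨p, hp, hxp⟩ := hx
    have hσ := sigmaPerm_apply_of_mem (hL p hp) hxp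
    have hmoved : sigmaPerm p.1 p.2 x ≠ x := by
      have := hL p hp
      rw [hσ]
      split_ifs <;> omega
    exact Or.inl ⟨p, hp, hxp, (List.prod_apply_of_pairwise_disjoint hD.disjoint_sigmaPerm
      (List.mem_map_of_mem hp) hmoved).trans hσ⟩
  · push Not at hx
    refine Or.inr ⟨hx, List.prod_apply_of_forall_apply_eq fun σ hσ => ?_⟩
    obtain ⟨p, hp, rfl⟩ := List.mem_map.1 hσ
    exact sigmaPerm_apply_of_notMem (hx p hp)

include hD in
lemma eq_of_mem_sigmaSupport {p q : ℕ × ℕ} (hp : p ∈ L) (hq : q ∈ L) {x : ℕ}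
    (hxp : x ∈ sigmaSupport p.1 p.2) (hxq : x ∈ sigmaSupport q.1 q.2) : p = q := by
  by_contra hpq
  have := (hD.forall hp hq hpq).separated
  rw [sigmaSupport, mem_Icc] at hxp hxq
  omega

include hL hD in
lemma kostantProd_apply_apply (x : ℕ) : kostantProd L (kostantProd L x) = x := by
  rcases kostantProd_apply_cases hL hD x with ⟨p, hp, hxp, hx⟩ | ⟨-, hx⟩
  · have hwx : kostantProd L x ∈ sigmaSupport p.1 p.2 := by
      rw [sigmaSupport, mem_Icc] at hxp ⊢
      rw [hx]
      split_ifs <;> omega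
    rcases kostantProd_apply_cases hL hD (kostantProd L x) with ⟨q, hq, hwq, hw⟩ | ⟨hw, -⟩
    · obtain rfl := eq_of_mem_sigmaSupport hD hq hp hwq hwx
      have := hL q hq
      rw [hw, hx]
      rw [sigmaSupport, mem_Icc] at hxp
      split_ifs <;> omega
    · exact absurd hwx (hw p hp)
  · rw [hx, hx]

include hL hD in
lemma kostantProd_inversion {x y : ℕ} (hxy : x < y) (h : kostantProd L y < kostantProd L x) :
    ∃ p ∈ L, p.1 - p.2 ≤ x ∧ x ≤ p.1 ∧ p.1 < y ∧ y ≤ p.1 + p.2 + 1 := by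
  rcases kostantProd_apply_cases hL hD x with ⟨p, hp, hxp, hx⟩ | ⟨hxL, hx⟩ <;>
  rcases kostantProd_apply_cases hL hD y with ⟨q, hq, hyq, hy⟩ | ⟨hyL, hy⟩ <;>
  rw [hx, hy] at h
  · rw [sigmaSupport, mem_Icc] at hxp hyq
    obtain rfl | hpq := eq_or_ne p q
    · refine ⟨p, hp, ?_⟩
      split_ifs at h <;> omega
    · have := (hD.forall hp hq hpq).separated
      split_ifs at h <;> omega
  · have := hyL p hp
    rw [sigmaSupport, mem_Icc] at hxp this
    split_ifs at h <;> omega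
  · have := hxL q hq
    rw [sigmaSupport, mem_Icc] at hyq this
    split_ifs at h <;> omega
  · omega

include hL hD in
lemma kostantProd_avoids321 (n : ℕ) : Avoids321 n (kostantProd L) := by
  rintro x y z - hxy hyz - ⟨h₁, h₂⟩
  obtain ⟨p, hp, -, -, hpy, hyp⟩ := kostantProd_inversion hL hD hxy h₁
  obtain ⟨q, hq, hqy, hyq, -, -⟩ := kostantProd_inversion hL hD hyz h₂
  obtain rfl := eq_of_mem_sigmaSupport hD hp hq (x := y)
    (by rw [sigmaSupport, mem_Icc]; omega) (by rw [sigmaSupport, mem_Icc]; omega)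
  omega

end kostantProd

lemma IsKostant.isInvolutionOn {n : ℕ} {w : Perm ℕ} (h : IsKostant n w) :
    IsInvolutionOn n w := by
  obtain ⟨L, hL, hD, rfl⟩ := h
  have hL' : ∀ p ∈ L, p.2 < p.1 := fun p hp => (hL p hp).bounds.1
  refine ⟨fun x hx => ?_, Perm.ext (kostantProd_apply_apply hL' hD)⟩
  rcases kostantProd_apply_cases hL' hD x with ⟨p, hp, hxp, -⟩ | ⟨-, hx'⟩
  · have := (hL p hp).bounds
    rw [sigmaSupport, mem_Icc] at hxp
    omega
  · exact absurd hx' hx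

lemma IsKostant.avoids321 {n : ℕ} {w : Perm ℕ} (h : IsKostant n w) : Avoids321 n w := by
  obtain ⟨L, hL, hD, rfl⟩ := h
  exact kostantProd_avoids321 (fun p hp => (hL p hp).bounds.1) hD n

section involution

variable {n : ℕ} {w w' : Perm ℕ}

lemma IsInvolutionOn.apply_apply (hw : IsInvolutionOn n w) (k : ℕ) : w (w k) = k :=
  Perm.ext_iff.1 hw.2 k

def openers (n : ℕ) (w : Perm ℕ) : Finset ℕ := (Icc 1 n).filter fun k => k < w k

lemma IsInvolutionOn.mem_openers (hw : IsInvolutionOn n w) {k : ℕ} :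
    k ∈ openers n w ↔ k < w k := by
  rw [openers, mem_filter, mem_Icc]
  exact ⟨fun h => h.2, fun h => ⟨hw.1 k h.ne', h⟩⟩

lemma IsInvolutionOn.ncard_setOf_apply_ne (hw : IsInvolutionOn n w) :
    {k | w k ≠ k}.ncard = 2 * (openers n w).card := by
  have hdisj : Disjoint (openers n w) ((openers n w).image w) := by
    refine disjoint_left.2 fun k hk hk' => ?_
    obtain ⟨p, hp, rfl⟩ := mem_image.1 hk'
    rw [hw.mem_openers] at hk hp
    rw [hw.apply_apply] at hk
    omega
  have hset : {k | w k ≠ k} = ↑(openers n w ∪ (openers n w).image w) := by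
    ext k
    simp only [Set.mem_ofPred_eq, coe_union, coe_image, Set.mem_union, mem_coe, Set.mem_image,
      hw.mem_openers]
    constructor
    · intro hk
      rcases Nat.lt_or_gt_of_ne hk with hk | hk
      · exact Or.inr ⟨w k, by rwa [hw.apply_apply], hw.apply_apply k⟩
      · exact Or.inl hk
    · rintro (hk | ⟨p, hp, rfl⟩)
      · exact hk.ne'
      · rw [hw.apply_apply]
        exact hp.ne
  rw [hset, Set.ncard_coe_finset, card_union_of_disjoint hdisj,
    card_image_of_injective _ w.injective, two_mul]

variable (hw : IsInvolutionOn n w) (hw' : IsInvolutionOn n w')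
  (hop : ∀ k, k < w k ↔ k < w' k) {x : ℕ} (hx : ∀ z < x, w z = w' z)

include hw hw' hx in
lemma apply_eq_of_apply_lt (h : w x < x) : w x = w' x := by
  have hwx : x = w' (w x) := (hw.apply_apply x).symm.trans (hx _ h)
  calc w x = w' (w' (w x)) := (hw'.apply_apply _).symm
    _ = w' x := by rw [← hwx]

/- With `y = w x`: `y` closes an arc of `w`, so it is no opener of `w'` and `z = w' y ≤ y`,
while `z > x` because `w` and `w'` agree below `x`. Then the positions `x < y < w' x` carry the
values `w' x > z > x`, a `321` in `w'`. -/
include hw hw' hop hx in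
lemma not_apply_lt_of_avoids321 (h321 : Avoids321 n w') (h : x < w x) : ¬ w x < w' x := by
  intro hlt
  have hzy : ¬ w x < w' (w x) := by rw [← hop, hw.apply_apply]; omega
  have hxz : x < w' (w x) := by
    rcases lt_trichotomy (w' (w x)) x with hzx | hzx | hzx
    · have := hx _ hzx
      rw [hw'.apply_apply] at this
      exact absurd (w.injective this) hzx.ne
    · have := congrArg w' hzx
      rw [hw'.apply_apply] at this
      omega
    · exact hzx
  have hx := hw'.1 x (by omega)
  have hw'x := hw'.1 (w' x) (by rw [hw'.apply_apply]; omega)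
  exact h321 x (w x) (w' x) hx.1 h hlt hw'x.2 ⟨by omega, by rw [hw'.apply_apply]; omega⟩

end involution

lemma eq_of_openers_eq {n : ℕ} {w w' : Perm ℕ} (hw : IsInvolutionOn n w)
    (hw' : IsInvolutionOn n w') (h : Avoids321 n w) (h' : Avoids321 n w')
    (hP : openers n w = openers n w') : w = w' := by
  have hop : ∀ k, k < w k ↔ k < w' k := fun k => by
    rw [← hw.mem_openers, hP, hw'.mem_openers]
  ext x
  induction x using Nat.strong_induction_on with
  | _ x ih =>
    have ih' : ∀ z < x, w' z = w z := fun z hz => (ih z hz).symm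
    by_cases hlt : w x < x
    · exact apply_eq_of_apply_lt hw hw' ih hlt
    by_cases hlt' : w' x < x
    · exact (apply_eq_of_apply_lt hw' hw ih' hlt').symm
    by_cases hfix : w x = x
    · rw [hfix]
      have := hop x
      omega
    · have := hop x
      have h₁ := not_apply_lt_of_avoids321 hw hw' hop ih h' (by omega)
      have h₂ := not_apply_lt_of_avoids321 hw' hw (fun k => (hop k).symm) ih' h (by omega)
      omega

lemma finite_setOf_isInvolutionOn_avoids321 (n : ℕ) :
    {w : Perm ℕ | IsInvolutionOn n w ∧ Avoids321 n w}.Finite :=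
  Set.Finite.of_injOn (f := openers n) (t := ↑(Icc 1 n).powerset)
    (fun _ _ => mem_coe.2 (mem_powerset.2 (filter_subset _ _)))
    (fun _ hw _ hw' h => eq_of_openers_eq hw.1 hw'.1 hw.2 hw'.2 h) (Set.toFinite _)

lemma mia_le_choose (n a : ℕ) : mia n a ≤ n.choose a := by
  calc mia n a ≤ (↑((Icc 1 n).powersetCard a) : Set (Finset ℕ)).ncard :=
        Set.ncard_le_ncard_of_injOn (openers n)
          (fun w hw => mem_powersetCard.2
            ⟨filter_subset _ _, by have := hw.1.ncard_setOf_apply_ne; have := hw.2.2; omega⟩)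
          (fun _ hw _ hw' h => eq_of_openers_eq hw.1 hw'.1 hw.2.1 hw'.2.1 h)
    _ = n.choose a := by
        rw [Set.ncard_coe_finset, card_powersetCard, Nat.card_Icc, Nat.add_sub_cancel]

lemma ki_le_mia (n a : ℕ) : ki n a ≤ mia n a :=
  Set.ncard_le_ncard (fun _ hw => ⟨hw.1.isInvolutionOn, hw.1.avoids321, hw.2⟩)
    ((finite_setOf_isInvolutionOn_avoids321 n).subset fun _ hw => ⟨hw.1, hw.2.1⟩)

def IsSpread (g : ℕ) (P : Finset ℕ) : Prop := ∀ p ∈ P, ∀ q ∈ P, p < q → p + g ≤ q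

instance (g : ℕ) : DecidablePred (IsSpread g) := fun P => by
  unfold IsSpread
  infer_instance

/- A set that is not `g`-spread is `insert (p + d + 1) Q` for some `(a - 1)`-set `Q`, some
`p ∈ Q` and some `d < g`. -/
lemma card_filter_not_isSpread_le (s : Finset ℕ) (a g : ℕ) :
    ((s.powersetCard a).filter fun P => ¬ IsSpread g P).card ≤
      s.card.choose (a - 1) * ((a - 1) * g) := by
  calc _ ≤ ((s.powersetCard (a - 1)).biUnion fun Q =>
          (Q ×ˢ range g).image fun pd => insert (pd.1 + pd.2 + 1) Q).card := by
        refine card_le_card fun P hP => ?_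
        obtain ⟨hPs, hcard⟩ := mem_powersetCard.1 (mem_filter.1 hP).1
        have hbad := (mem_filter.1 hP).2
        simp only [IsSpread, not_forall, not_le] at hbad
        obtain ⟨p, hp, q, hq, hpq, hqp⟩ := hbad
        refine mem_biUnion.2 ⟨P.erase q, mem_powersetCard.2
          ⟨(erase_subset q P).trans hPs, by rw [card_erase_of_mem hq, hcard]⟩, ?_⟩
        refine mem_image.2 ⟨(p, q - p - 1), mem_product.2
          ⟨mem_erase.2 ⟨hpq.ne, hp⟩, mem_range.2 (by omega)⟩, ?_⟩
        rw [show p + (q - p - 1) + 1 = q by omega, insert_erase hq]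
    _ ≤ (s.powersetCard (a - 1)).card * ((a - 1) * g) :=
        card_biUnion_le_card_mul _ _ _ fun Q hQ => card_image_le.trans <| by
          rw [card_product, card_range, (mem_powersetCard.1 hQ).2]
    _ = s.card.choose (a - 1) * ((a - 1) * g) := by rw [card_powersetCard]

lemma choose_le_card_filter_isSpread_add (s : Finset ℕ) (a g : ℕ) :
    s.card.choose a ≤ ((s.powersetCard a).filter (IsSpread g)).card +
      s.card.choose (a - 1) * ((a - 1) * g) := by
  rw [← card_powersetCard, ← card_filter_add_card_filter_not (IsSpread g)]
  exact Nat.add_le_add_left (card_filter_not_isSpread_le s a g) _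

/- `σ_{p,0}` is the adjacent transposition `(p p+1)`. -/
def adjacentSwaps (P : Finset ℕ) : List (ℕ × ℕ) := (P.sort (· ≤ ·)).map fun p => (p, 0)

section adjacentSwaps

variable {n : ℕ} {P : Finset ℕ} (hP : P ⊆ Icc 1 (n - 1)) (hs : IsSpread 3 P)

include hP in
lemma specialParams_of_mem_adjacentSwaps {p : ℕ × ℕ} (hp : p ∈ adjacentSwaps P) :
    SpecialParams n p.1 p.2 := by
  obtain ⟨q, hq, rfl⟩ := List.mem_map.1 hp
  have := mem_Icc.1 (hP ((mem_sort _).1 hq))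
  exact ⟨this.1, this.2, Nat.zero_le _⟩

include hs in
lemma pairwise_distant_adjacentSwaps : (adjacentSwaps P).Pairwise Distant := by
  refine List.Pairwise.map _ (fun p q hpq => ?_) <| (sortedLT_sort P).pairwise.imp_of_mem
    fun hp hq hpq => hs _ ((mem_sort _).1 hp) _ ((mem_sort _).1 hq) hpq
  rw [distant_iff]
  omega

include hP hs in
lemma isKostant_adjacentSwaps : IsKostant n (kostantProd (adjacentSwaps P)) :=
  ⟨_, fun _ => specialParams_of_mem_adjacentSwaps hP, pairwise_distant_adjacentSwaps hs, rfl⟩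

include hP hs in
lemma openers_adjacentSwaps : openers n (kostantProd (adjacentSwaps P)) = P := by
  ext k
  rw [(isKostant_adjacentSwaps hP hs).isInvolutionOn.mem_openers]
  have hL : ∀ p ∈ adjacentSwaps P, p.2 < p.1 := fun p hp =>
    (specialParams_of_mem_adjacentSwaps hP hp).bounds.1
  rcases kostantProd_apply_cases hL (pairwise_distant_adjacentSwaps hs) k with
    ⟨p, hp, hkp, hk⟩ | ⟨hk, hk'⟩
  · obtain ⟨q, hq, rfl⟩ := List.mem_map.1 hp
    rw [mem_sort] at hq
    rw [sigmaSupport, mem_Icc] at hkp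
    rw [hk]
    obtain rfl | rfl : k = q ∨ k = q + 1 := by omega
    · simp [hq]
    · have : q + 1 ∉ P := fun h => by have := hs q hq (q + 1) h (by omega); omega
      simp [this]
  · rw [hk', lt_self_iff_false, false_iff]
    exact fun hkP => hk (k, 0) (List.mem_map.2 ⟨k, (mem_sort _).2 hkP, rfl⟩)
      (by simp [sigmaSupport])

end adjacentSwaps

lemma choose_le_ki_add (n a : ℕ) :
    (n - 1).choose a ≤ ki n a + (n - 1).choose (a - 1) * ((a - 1) * 3) := by
  have h := choose_le_card_filter_isSpread_add (Icc 1 (n - 1)) a 3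
  rw [Nat.card_Icc, Nat.add_sub_cancel] at h
  suffices ((Icc 1 (n - 1)).powersetCard a |>.filter (IsSpread 3)).card ≤ ki n a by omega
  rw [← Set.ncard_coe_finset]
  refine Set.ncard_le_ncard_of_injOn (fun P => kostantProd (adjacentSwaps P)) (fun P hP => ?_)
    (fun P hP P' hP' h => ?_)
    ((finite_setOf_isInvolutionOn_avoids321 n).subset fun _ hw =>
      ⟨hw.1.isInvolutionOn, hw.1.avoids321⟩)
  · obtain ⟨hPs, hcard⟩ := mem_powersetCard.1 (mem_filter.1 hP).1
    have hK := isKostant_adjacentSwaps hPs (mem_filter.1 hP).2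
    refine ⟨hK, ?_⟩
    rw [hK.isInvolutionOn.ncard_setOf_apply_ne, openers_adjacentSwaps hPs (mem_filter.1 hP).2,
      hcard]
  · have hP := mem_filter.1 (mem_coe.1 hP)
    have hP' := mem_filter.1 (mem_coe.1 hP')
    rw [← openers_adjacentSwaps (mem_powersetCard.1 hP.1).1 hP.2,
      ← openers_adjacentSwaps (mem_powersetCard.1 hP'.1).1 hP'.2]
    exact congrArg (openers n) h

lemma Nat.mul_choose_le_mul_choose_sub_one_add (n a : ℕ) :
    n * n.choose a ≤ n * (n - 1).choose a + a * n.choose a := by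
  rcases n with _ | m
  · simp
  · rw [Nat.add_sub_cancel, mul_comm (m + 1) (m.choose a), Nat.choose_mul_succ_eq, mul_comm a,
      ← mul_add, mul_comm]
    exact Nat.mul_le_mul_left _ (by omega)

lemma Nat.mul_choose_sub_one_sub_one {a : ℕ} (ha : 1 ≤ a) (n : ℕ) :
    n * (n - 1).choose (a - 1) = a * n.choose a := by
  rcases n with _ | m
  · simp [Nat.choose_eq_zero_of_lt ha]
  · obtain ⟨b, rfl⟩ := Nat.exists_eq_add_of_le' ha
    rw [Nat.add_sub_cancel, Nat.add_sub_cancel, Nat.add_one_mul_choose_eq, mul_comm]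

lemma mul_choose_le_mul_ki_add (n a : ℕ) :
    n * n.choose a ≤ n * ki n a + 3 * a ^ 2 * n.choose a := by
  have h₁ := Nat.mul_le_mul_left n (choose_le_ki_add n a)
  have h₂ : n * ((n - 1).choose (a - 1) * ((a - 1) * 3)) = 3 * (a - 1) * a * n.choose a := by
    rcases Nat.eq_zero_or_pos a with rfl | ha
    · simp
    · calc _ = 3 * (a - 1) * (n * (n - 1).choose (a - 1)) := by ring
        _ = _ := by rw [Nat.mul_choose_sub_one_sub_one ha]; ring
  have h₃ : 3 * (a - 1) * a + a ≤ 3 * a ^ 2 := by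
    rcases a with _ | b
    · simp
    · rw [Nat.add_sub_cancel]
      nlinarith
  calc n * n.choose a ≤ n * (n - 1).choose a + a * n.choose a :=
        Nat.mul_choose_le_mul_choose_sub_one_add n a
    _ ≤ n * ki n a + (3 * (a - 1) * a + a) * n.choose a := by
        rw [mul_add, h₂] at h₁
        rw [add_mul, ← add_assoc]
        exact Nat.add_le_add_right h₁ _
    _ ≤ n * ki n a + 3 * a ^ 2 * n.choose a := by gcongr

open Filter Topology in
lemma tendsto_div_of_le_of_mul_le {x y c : ℕ → ℕ} (K : ℕ) (hxy : ∀ n, x n ≤ y n)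
    (hyc : ∀ n, y n ≤ c n) (hc : ∀ᶠ n in atTop, 0 < c n)
    (h : ∀ n, n * c n ≤ n * x n + K * c n) :
    Tendsto (fun n => (x n : ℝ) / y n) atTop (𝓝 1) := by
  have hlow : Tendsto (fun n : ℕ => 1 - (K : ℝ) / n) atTop (𝓝 1) := by
    simpa using tendsto_const_nhds.sub (tendsto_const_div_atTop_nhds_zero_nat (K : ℝ))
  refine tendsto_of_tendsto_of_tendsto_of_le_of_le' hlow tendsto_const_nhds ?_
    (Eventually.of_forall fun n => div_le_one_of_le₀ (Nat.cast_le.2 (hxy n)) (Nat.cast_nonneg _))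
  filter_upwards [hc, eventually_gt_atTop K] with n hcn hn
  have hxn : 0 < x n := by
    by_contra! h0
    have := h n
    rw [Nat.le_zero.1 h0, mul_zero, zero_add] at this
    exact absurd (Nat.le_of_mul_le_mul_right this hcn) (by omega)
  have hn' : (0 : ℝ) < n := by exact_mod_cast (Nat.zero_le K).trans_lt hn
  have hcn' : (0 : ℝ) < c n := by exact_mod_cast hcn
  have h' : (n : ℝ) * c n ≤ n * x n + K * c n := by exact_mod_cast h n
  calc 1 - (K : ℝ) / n ≤ x n / c n := by
        rw [le_div_iff₀ hcn', sub_mul, div_mul_eq_mul_div, sub_le_iff_le_add,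
          ← sub_le_iff_le_add', le_div_iff₀ hn']
        nlinarith
    _ ≤ x n / y n := div_le_div_of_nonneg_left (Nat.cast_nonneg _)
        (Nat.cast_pos.2 (hxn.trans_le (hxy n))) (Nat.cast_le.2 (hyc n))

/-- For a fixed number `a` of transpositions, the proportion of Kostant involutions among
all 321-avoiding involutions in `S_n` with exactly `a` transpositions tends to `1`
as `n → ∞`. -/
theorem ki_div_mi_fixed_a_tendsto_one (a : ℕ) :
    Filter.Tendsto (fun n : ℕ => (ki n a : ℝ) / (mia n a : ℝ))
      Filter.atTop (nhds 1) :=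
  tendsto_div_of_le_of_mul_le (3 * a ^ 2) (ki_le_mia · a) (mia_le_choose · a)
    (Filter.eventually_atTop.2 ⟨a, fun _ hn => Nat.choose_pos hn⟩)
    (mul_choose_le_mul_ki_add · a)
end

section
/- The sequence of real numbers r_n := ( Σ_{a=0}^{⌊n/2⌋} C(n−a, a) · n!·(n−2a+1)! / (a!·(n−2a)!·(n−a+1)!) ) / C_n, where C_n = (1/(n+1))·binom(2n, n) is the n-th Catalan number, tends to 0 as n → ∞. (Here the numerator counts the 321-avoiding permutations of S_n for which the answer to Kostant's problem is positive, and the denominator counts all 321-avoiding permutations of S_n.) -/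
/-!
Writing `(n + 1)! = C(n + 1, a) · a! · (n - a + 1)!` and bounding `C(n - a, a) ≤ 2 ^ (n - a)`,
the `a`-th summand is at most `2 ^ (n - a) · C(n + 1, a)`, so by the binomial theorem the
numerator is at most `3 ^ (n + 1)`. The Catalan number grows like `4 ^ n` up to a polynomial
factor, hence the proportion is `O(n ^ 2 (3 / 4) ^ n)`.
-/

open Filter Finset Nat

lemma choose_mul_factorial_mul_factorial_le {n a : ℕ} (ha : 2 * a ≤ n) :
    (n - a).choose a * n ! * (n - 2 * a + 1)! ≤
      2 ^ (n - a) * (n + 1).choose a * (a ! * (n - 2 * a)! * (n - a + 1)!) := by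
  have hfact : (n + 1).choose a * a ! * (n - a + 1)! = (n + 1)! := by
    rw [show n - a + 1 = n + 1 - a by omega]
    exact Nat.choose_mul_factorial_mul_factorial (by omega)
  have hsucc : n ! * (n - 2 * a + 1) ≤ (n + 1)! := by
    rw [factorial_succ, mul_comm]
    gcongr
    omega
  calc (n - a).choose a * n ! * (n - 2 * a + 1)!
      = (n - a).choose a * (n ! * (n - 2 * a + 1)) * (n - 2 * a)! := by
        rw [factorial_succ]; ring
    _ ≤ 2 ^ (n - a) * (n + 1)! * (n - 2 * a)! := by
        gcongr
        exact choose_le_two_pow _ _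
    _ = 2 ^ (n - a) * (n + 1).choose a * (a ! * (n - 2 * a)! * (n - a + 1)!) := by
        rw [← hfact]; ring

lemma sum_range_two_pow_mul_choose (m : ℕ) :
    ∑ a ∈ range (m + 1), 2 ^ (m - a) * m.choose a = 3 ^ m := by
  rw [show 3 = 1 + 2 from rfl, add_pow]
  simp

lemma kostant_sum_le_three_pow (n : ℕ) :
    ∑ a ∈ range (n / 2 + 1),
        (((n - a).choose a * n ! * (n - 2 * a + 1)! : ℕ) : ℝ) /
          ((a ! * (n - 2 * a)! * (n - a + 1)! : ℕ) : ℝ) ≤ 3 ^ (n + 1) := by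
  calc _ ≤ ∑ a ∈ range (n / 2 + 1), ((2 ^ (n + 1 - a) * (n + 1).choose a : ℕ) : ℝ) := by
        refine sum_le_sum fun a ha => ?_
        have h2a : 2 * a ≤ n := by rw [mem_range] at ha; omega
        rw [div_le_iff₀ (by positivity)]
        have hpow : 2 ^ (n - a) ≤ 2 ^ (n + 1 - a) := Nat.pow_le_pow_right two_pos (by omega)
        exact_mod_cast (choose_mul_factorial_mul_factorial_le h2a).trans (by gcongr)
    _ ≤ ∑ a ∈ range (n + 1 + 1), ((2 ^ (n + 1 - a) * (n + 1).choose a : ℕ) : ℝ) :=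
        sum_le_sum_of_subset_of_nonneg (range_subset_range.mpr (by omega))
          fun _ _ _ => by positivity
    _ = 3 ^ (n + 1) := by
        rw [← Nat.cast_sum, sum_range_two_pow_mul_choose]; push_cast; rfl

lemma four_pow_le_four_mul_sq_mul_catalan {n : ℕ} (hn : 0 < n) :
    4 ^ n ≤ 4 * n ^ 2 * catalan n :=
  calc 4 ^ n ≤ 2 * n * n.centralBinom := four_pow_le_two_mul_self_mul_centralBinom n hn
    _ = 2 * n * ((n + 1) * catalan n) := by rw [succ_mul_catalan_eq_centralBinom]
    _ ≤ 2 * n * ((n + n) * catalan n) := by gcongr; omega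
    _ = 4 * n ^ 2 * catalan n := by ring

/-- The proportion `(Σ_{a=0}^{⌊n/2⌋} C(n-a,a)·n!·(n-2a+1)!/(a!·(n-2a)!·(n-a+1)!)) / C_n`
(Kostant positive 321-avoiding permutations among all 321-avoiding permutations of `S_n`,
where `C_n` is the `n`-th Catalan number) tends to `0` as `n → ∞`. -/
theorem kostant_positive_proportion_tendsto_zero :
    Filter.Tendsto (fun n : ℕ =>
        (∑ a ∈ Finset.range (n / 2 + 1),
          (((n - a).choose a * n.factorial * (n - 2 * a + 1).factorial : ℕ) : ℝ) /
            ((a.factorial * (n - 2 * a).factorial * (n - a + 1).factorial : ℕ) : ℝ)) /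
          (catalan n : ℝ))
      Filter.atTop (nhds 0) := by
  have hbound : Tendsto (fun n : ℕ => 12 * ((n : ℝ) ^ 2 * (3 / 4 : ℝ) ^ n)) atTop (nhds 0) := by
    simpa using (tendsto_pow_const_mul_const_pow_of_abs_lt_one 2
      (by norm_num [abs_of_pos] : |(3 / 4 : ℝ)| < 1)).const_mul 12
  refine tendsto_of_tendsto_of_tendsto_of_le_of_le' tendsto_const_nhds hbound
    (Eventually.of_forall fun n => by positivity) ?_
  filter_upwards [eventually_gt_atTop 0] with n hn
  have hcat : (4 : ℝ) ^ n ≤ 4 * n ^ 2 * catalan n := by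
    exact_mod_cast four_pow_le_four_mul_sq_mul_catalan hn
  have hcat_pos : 0 < catalan n :=
    Nat.pos_of_ne_zero fun h => by simpa [h] using four_pow_le_four_mul_sq_mul_catalan hn
  rw [div_le_iff₀ (by exact_mod_cast hcat_pos)]
  calc _ ≤ (3 : ℝ) ^ (n + 1) := kostant_sum_le_three_pow n
    _ = 3 * (3 / 4 : ℝ) ^ n * 4 ^ n := by
        rw [pow_succ, mul_assoc, ← mul_pow]; norm_num; ring
    _ ≤ 3 * (3 / 4 : ℝ) ^ n * (4 * n ^ 2 * catalan n) := by gcongr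
    _ = 12 * ((n : ℝ) ^ 2 * (3 / 4 : ℝ) ^ n) * catalan n := by ring
end

section
/- The sequence of real numbers s_n := Σ_{a=0}^{⌊n/2⌋} (n+1) · C(n−a, a) · C(n, a) / C(2n, n) tends to 0 as n → ∞. -/
/-!
Bounding `C(n - a, a) ≤ 2 ^ (n - a)` and summing over all `a ≤ n` gives, by the binomial
theorem, `Σ_a C(n - a, a) C(n, a) ≤ Σ_a 2 ^ (n - a) C(n, a) = 3 ^ n`, while the central binomial
coefficient satisfies `4 ^ n ≤ (2n + 1) C(2n, n)`. Hence `s_n ≤ (n + 1)(2n + 1)(3/4) ^ n → 0`.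
-/

open Finset Filter Topology

lemma sum_choose_sub_mul_choose_le_three_pow (n : ℕ) :
    ∑ a ∈ range (n + 1), (n - a).choose a * n.choose a ≤ 3 ^ n :=
  calc ∑ a ∈ range (n + 1), (n - a).choose a * n.choose a
      ≤ ∑ a ∈ range (n + 1), 1 ^ a * 2 ^ (n - a) * n.choose a := by
        gcongr with a
        rw [one_pow, one_mul]
        exact Nat.choose_le_two_pow _ _
    _ = (1 + 2) ^ n := by simp only [add_pow, Nat.cast_id]

lemma tendsto_add_one_mul_two_mul_add_one_mul_pow {r : ℝ} (hr : |r| < 1) :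
    Tendsto (fun n : ℕ => ((n : ℝ) + 1) * (2 * n + 1) * r ^ n) atTop (𝓝 0) := by
  have h k := tendsto_pow_const_mul_const_pow_of_abs_lt_one k hr
  have hsum := (((h 2).const_mul 2).add ((h 1).const_mul 3)).add (h 0)
  simp only [mul_zero, add_zero] at hsum
  refine hsum.congr fun n => ?_
  ring

lemma sum_div_central_binomial_le (n : ℕ) :
    ∑ a ∈ range (n / 2 + 1),
        (((n + 1) * (n - a).choose a * n.choose a : ℕ) : ℝ) / (((2 * n).choose n : ℕ) : ℝ)
      ≤ ((n : ℝ) + 1) * (2 * n + 1) * (3 / 4) ^ n := by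
  have hcentral : (0 : ℝ) < ((2 * n).choose n : ℕ) := by
    exact_mod_cast Nat.choose_pos (by omega)
  have hnum : ∑ a ∈ range (n / 2 + 1), (n + 1) * (n - a).choose a * n.choose a
      ≤ (n + 1) * 3 ^ n := by
    simp only [mul_assoc, ← mul_sum]
    gcongr
    calc ∑ a ∈ range (n / 2 + 1), (n - a).choose a * n.choose a
        ≤ ∑ a ∈ range (n + 1), (n - a).choose a * n.choose a :=
          sum_le_sum_of_subset (range_subset_range.2 (by omega))
      _ ≤ 3 ^ n := sum_choose_sub_mul_choose_le_three_pow n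
  have hden : (4 : ℝ) ^ n ≤ (2 * n + 1) * ((2 * n).choose n : ℕ) := by
    exact_mod_cast Nat.four_pow_le_two_mul_add_one_mul_central_binom n
  rw [← sum_div, div_le_iff₀ hcentral, ← Nat.cast_sum]
  calc (((∑ a ∈ range (n / 2 + 1), (n + 1) * (n - a).choose a * n.choose a : ℕ)) : ℝ)
      ≤ ((n : ℝ) + 1) * 3 ^ n := by exact_mod_cast hnum
    _ = ((n : ℝ) + 1) * (3 / 4) ^ n * 4 ^ n := by rw [mul_assoc, ← mul_pow]; norm_num
    _ ≤ ((n : ℝ) + 1) * (3 / 4) ^ n * ((2 * n + 1) * ((2 * n).choose n : ℕ)) := by gcongr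
    _ = ((n : ℝ) + 1) * (2 * n + 1) * (3 / 4) ^ n * ((2 * n).choose n : ℕ) := by ring

/-- The sequence `s_n = Σ_{a=0}^{⌊n/2⌋} (n+1)·C(n-a,a)·C(n,a) / C(2n,n)` tends to `0`
as `n → ∞`. -/
theorem sum_div_central_binomial_tendsto_zero :
    Filter.Tendsto (fun n : ℕ =>
        ∑ a ∈ Finset.range (n / 2 + 1),
          (((n + 1) * (n - a).choose a * n.choose a : ℕ) : ℝ) /
            (((2 * n).choose n : ℕ) : ℝ))
      Filter.atTop (nhds 0) := by
  have hr : |(3 / 4 : ℝ)| < 1 := by rw [abs_lt]; norm_num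
  refine squeeze_zero (fun n => ?_) sum_div_central_binomial_le
    (tendsto_add_one_mul_two_mul_add_one_mul_pow hr)
  exact sum_nonneg fun a _ => by positivity
end
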